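/- In the k-fold Cartesian power G^k of a connected graph G, any two vertices in the same S_k-orbit (i.e., k-tuples that are coordinate permutations of each other) are connected by a path P in G^k such that η*(P) = 0, where η*: E(G^k) → E(G^(k)) is the map on edge spaces induced by the quotient projection η: G^k → G^(k). -/

import Mathlib

open Finset
open scoped Classical

variable {V W : Type*}

/-- The reduced `k`-th power of a graph `G`: vertices are size-`k` multisets
(degree-`k` monic monomials) of vertices of `G`; `a·f` is adjacent to `b·f`
whenever `ab ∈ E(G)` and `f` is a degree-`(k-1)` monomial. -/
def reducedPow (G : SimpleGraph V) (k : ℕ) : SimpleGraph (Sym V k) :=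
  SimpleGraph.fromRel (fun m m' => ∃ a b : V, G.Adj a b ∧
    ∃ f : Multiset V, (m : Multiset V) = a ::ₘ f ∧ (m' : Multiset V) = b ::ₘ f)

/-- The `k`-fold Cartesian power of a graph. -/
def cartPow (G : SimpleGraph V) (k : ℕ) : SimpleGraph (Fin k → V) :=
  SimpleGraph.fromRel (fun x y => ∃ i, G.Adj (x i) (y i) ∧ ∀ j, j ≠ i → x j = y j)

/-- The quotient map `G^k → G^(k)` sending a tuple to its multiset of coordinates. -/
def symOfTuple (k : ℕ) (x : Fin k → V) : Sym V k :=
  ⟨(List.ofFn x : List V), by simp⟩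

/-- The linear map on edge spaces induced by a vertex map `φ` (a weak homomorphism):
an edge maps to its image if the image is a genuine edge, and to `0` if it collapses. -/
noncomputable def inducedMap (φ : V → W) [Fintype V] :
    (Sym2 V → ZMod 2) →ₗ[ZMod 2] (Sym2 W → ZMod 2) where
  toFun x e' := if e'.IsDiag then 0 else ∑ e : Sym2 V, if Sym2.map φ e = e' then x e else 0
  map_add' x y := by
    funext e'
    try dsimp only
    by_cases h : e'.IsDiag
    · simp [h]
    · rw [Pi.add_apply, if_neg h, if_neg h, if_neg h, ← Finset.sum_add_distrib]
      exact Finset.sum_congr rfl (fun e _ => by split <;> simp)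
  map_smul' c x := by
    funext e'
    try dsimp only
    by_cases h : e'.IsDiag
    · simp [h]
    · rw [RingHom.id_apply, Pi.smul_apply, smul_eq_mul, if_neg h, if_neg h, Finset.mul_sum]
      exact Finset.sum_congr rfl (fun e _ => by split <;> simp)

/-!
Induct on the Hamming distance between `x` and `y`. If `x j ≠ y j`, a counting argument gives
`i` with `x i = y j ≠ y i`. Transposing the coordinates `i` and `j` of `x` is realised by a path
that first moves coordinate `i` from `x i` to `x j` along a path `p` of `G` and then moves
coordinate `j` from `x j` back to `x i` along `p`. Since `η` forgets the order of coordinates,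
the second half has the same image under `η` as the first, traversed backwards, so every edge of
`G^(k)` is hit an even number of times and `η*` kills the path. The transposed tuple agrees with
`y` at `j` and wherever `x` did, which strictly lowers the distance; and as the rest of the path
keeps those coordinates fixed, it meets the swapping path only at its end.
-/

open Function Equiv SimpleGraph

def EvenCounts [DecidableEq V] (l : List V) : Prop := ∀ a, Even (l.count a)

lemma EvenCounts.append [DecidableEq V] {l l' : List V} (h : EvenCounts l)
    (h' : EvenCounts l') : EvenCounts (l ++ l') := fun a => by
  rw [List.count_append]
  exact (h a).add (h' a)

lemma evenCounts_append_reverse [DecidableEq V] (l : List V) : EvenCounts (l ++ l.reverse) :=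
  fun a => by
    rw [List.count_append, List.count_reverse]
    exact Even.add_self _

lemma inducedMap_indicator_apply [Fintype V] [DecidableEq V] [DecidableEq W] (φ : V → W)
    {l : List (Sym2 V)} (hl : l.Nodup) (e' : Sym2 W) :
    inducedMap φ (fun e => if e ∈ l then 1 else 0) e'
      = if e'.IsDiag then 0 else ((l.map (Sym2.map φ)).count e' : ZMod 2) := by
  simp only [inducedMap, LinearMap.coe_mk, AddHom.coe_mk]
  congr 1
  rw [← Finset.sum_filter, Finset.sum_boole, List.count_eq_countP, List.countP_map,
    List.countP_eq_length_filter, ← List.toFinset_card_of_nodup (hl.filter _)]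
  congr 2
  ext e
  simp [and_comm]

lemma inducedMap_indicator_eq_zero [Fintype V] [DecidableEq V] [DecidableEq W] {φ : V → W}
    {l : List (Sym2 V)} (hl : l.Nodup) (h : EvenCounts (l.map (Sym2.map φ))) :
    inducedMap φ (fun e => if e ∈ l then 1 else 0) = 0 := by
  funext e'
  obtain ⟨m, hm⟩ := h e'
  rw [inducedMap_indicator_apply φ hl, hm, Nat.cast_add, CharTwo.add_self_eq_zero, ite_self]
  rfl

lemma SimpleGraph.Walk.IsPath.append {G : SimpleGraph V} {u v w : V} {p : G.Walk u v}
    {q : G.Walk v w} (hp : p.IsPath) (hq : q.IsPath)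
    (h : ∀ z ∈ p.support, z ∈ q.support → z = v) : (p.append q).IsPath := by
  rw [Walk.isPath_def, Walk.support_append]
  refine hp.support_nodup.append hq.support_nodup.tail fun z hz hz' => ?_
  obtain rfl := h z hz (List.mem_of_mem_tail hz')
  have hnd := hq.support_nodup
  rw [← q.cons_tail_support] at hnd
  exact (List.nodup_cons.mp hnd).1 hz'

lemma exists_swap_partner [DecidableEq V] {k : ℕ} {x y : Fin k → V}
    (hperm : ∃ σ : Perm (Fin k), x = y ∘ σ) {j : Fin k} (hj : x j ≠ y j) :
    ∃ i, x i = y j ∧ y i ≠ y j := by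
  obtain ⟨σ, rfl⟩ := hperm
  by_contra! h
  have hsub : univ.filter (fun l => y (σ l) = y j) ⊆ univ.filter (fun l => y l = y j) :=
    fun l hl => by simpa using h l (by simpa using hl)
  have heq := eq_of_subset_of_card_le hsub (card_equiv σ (by simp)).ge
  have hjA : j ∈ univ.filter (fun l => y l = y j) := mem_filter.2 ⟨mem_univ j, rfl⟩
  rw [← heq, mem_filter] at hjA
  exact hj hjA.2

lemma hammingDist_comp_swap_lt [DecidableEq V] {k : ℕ} {x y : Fin k → V} {i j : Fin k}
    (hi : x i = y j) (hyij : y i ≠ y j) (hj : x j ≠ y j) :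
    hammingDist (x ∘ swap i j) y < hammingDist x y := by
  refine card_lt_card ((ssubset_iff_of_subset fun l => ?_).2
    ⟨j, by simpa using hj, by simp [hi]⟩)
  simp only [mem_filter, mem_univ, true_and, comp_apply]
  rcases eq_or_ne l i with rfl | hli
  · exact fun _ => hi ▸ hyij.symm
  rcases eq_or_ne l j with rfl | hlj
  · simp [hi]
  rw [swap_apply_of_ne_of_ne hli hlj]
  exact id

section SwapWalk

variable {G : SimpleGraph V} {k : ℕ}

lemma cartPow_adj_update {a b : V} (h : G.Adj a b) (z : Fin k → V) (i : Fin k) :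
    (cartPow G k).Adj (update z i a) (update z i b) := by
  rw [cartPow, fromRel_adj]
  refine ⟨fun hc => h.ne (by simpa using congrFun hc i),
    Or.inl ⟨i, by simpa using h, fun j hj => by simp [update_of_ne hj]⟩⟩

def updateHom (z : Fin k → V) (i : Fin k) : G →g cartPow G k :=
  ⟨update z i, fun h => cartPow_adj_update h z i⟩

@[simp] lemma coe_updateHom (z : Fin k → V) (i : Fin k) :
    ⇑(updateHom (G := G) z i) = update z i :=
  rfl

lemma update_comp_swap (x : Fin k → V) (i j : Fin k) (w : V) :
    update (x ∘ swap i j) j w = update x i w ∘ swap i j := by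
  rw [update_comp_equiv, symm_swap, swap_apply_left]

lemma updateHom_apply_self (x : Fin k → V) (i : Fin k) : updateHom (G := G) x i (x i) = x :=
  update_eq_self i x

lemma updateHom_comp_swap_apply_left (x : Fin k → V) (i j : Fin k) :
    updateHom (G := G) (x ∘ swap i j) j (x i) = x ∘ swap i j :=
  update_eq_self_iff.2 (by simp)

lemma updateHom_comp_swap_apply_right (x : Fin k → V) (i j : Fin k) :
    updateHom (G := G) (x ∘ swap i j) j (x j) = updateHom (G := G) x i (x j) := by
  ext l
  simp only [coe_updateHom, update_apply, comp_apply, swap_apply_def]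
  grind

def swapWalk (x : Fin k → V) (i j : Fin k) (p : G.Walk (x i) (x j)) :
    (cartPow G k).Walk x (x ∘ swap i j) :=
  ((p.map (updateHom x i)).copy (updateHom_apply_self x i) rfl).append
    ((p.map (updateHom (x ∘ swap i j) j)).copy (updateHom_comp_swap_apply_left x i j)
      (updateHom_comp_swap_apply_right x i j)).reverse

variable {x : Fin k → V} {i j : Fin k} {p : G.Walk (x i) (x j)}

lemma exists_eq_of_mem_support_swapWalk {v : Fin k → V} (hv : v ∈ (swapWalk x i j p).support) :
    ∃ w, v = update x i w ∨ v = update (x ∘ swap i j) j w := by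
  rw [swapWalk, Walk.mem_support_append_iff, Walk.support_copy, Walk.support_reverse,
    Walk.support_copy, List.mem_reverse, Walk.support_map, Walk.support_map] at hv
  simp only [List.mem_map, coe_updateHom] at hv
  rcases hv with ⟨w, -, rfl⟩ | ⟨w, -, rfl⟩
  exacts [⟨w, .inl rfl⟩, ⟨w, .inr rfl⟩]

lemma apply_of_mem_support_swapWalk {v : Fin k → V} (hv : v ∈ (swapWalk x i j p).support)
    {l : Fin k} (hli : l ≠ i) (hlj : l ≠ j) : v l = x l := by
  obtain ⟨w, rfl | rfl⟩ := exists_eq_of_mem_support_swapWalk hv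
  · exact update_of_ne hli _ _
  · rw [update_of_ne hlj, comp_apply, swap_apply_of_ne_of_ne hli hlj]

lemma eq_of_mem_support_swapWalk (hx : x i ≠ x j) {v : Fin k → V}
    (hv : v ∈ (swapWalk x i j p).support) (hvj : v j = x i) : v = x ∘ swap i j := by
  have hij : i ≠ j := fun h => hx (congrArg x h)
  obtain ⟨w, rfl | rfl⟩ := exists_eq_of_mem_support_swapWalk hv
  · exact absurd (by simpa [update_of_ne hij.symm] using hvj) hx.symm
  · rw [update_self] at hvj
    rw [hvj, update_eq_self_iff, comp_apply, swap_apply_right]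

lemma isPath_swapWalk (hij : i ≠ j) (hp : p.IsPath) : (swapWalk x i j p).IsPath := by
  refine ((Walk.isPath_copy _ _ _).2 (hp.map (update_injective x i))).append
    ((Walk.isPath_copy _ _ _).2 (hp.map (update_injective (x ∘ swap i j) j))).reverse
    fun z hz hz' => ?_
  rw [Walk.support_copy, Walk.support_map] at hz
  rw [Walk.support_reverse, Walk.support_copy, Walk.support_map, List.mem_reverse] at hz'
  obtain ⟨w, -, rfl⟩ := List.mem_map.1 hz
  obtain ⟨w', -, hw'⟩ := List.mem_map.1 hz'
  have hw : x j = w := by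
    simpa [update_of_ne hij] using congrFun hw' i
  rw [hw]

lemma edges_swapWalk :
    (swapWalk x i j p).edges = p.edges.map (Sym2.map (update x i)) ++
      (p.edges.map (Sym2.map (update (x ∘ swap i j) j))).reverse := by
  rw [swapWalk, Walk.edges_append, Walk.edges_copy, Walk.edges_reverse, Walk.edges_copy,
    Walk.edges_map, Walk.edges_map, coe_updateHom, coe_updateHom]

lemma evenCounts_swapWalk {β : Type*} [DecidableEq β] {η : (Fin k → V) → β}
    (hη : ∀ z, η (z ∘ swap i j) = η z) :
    EvenCounts ((swapWalk x i j p).edges.map (Sym2.map η)) := by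
  have hcomp : η ∘ update (x ∘ swap i j) j = η ∘ update x i :=
    funext fun w => by simp only [comp_apply, update_comp_swap, hη]
  rw [edges_swapWalk, List.map_append, List.map_reverse, List.map_map, List.map_map,
    ← Sym2.map_comp, ← Sym2.map_comp, hcomp]
  exact evenCounts_append_reverse _

end SwapWalk

theorem exists_isPath_evenCounts_of_perm [DecidableEq V] {β : Type*} [DecidableEq β]
    {G : SimpleGraph V} (hG : G.Connected) {k : ℕ} {η : (Fin k → V) → β}
    (hη : ∀ z (σ : Perm (Fin k)), η (z ∘ σ) = η z) (x y : Fin k → V)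
    (hperm : ∃ σ : Perm (Fin k), x = y ∘ σ) :
    ∃ P : (cartPow G k).Walk x y, P.IsPath ∧ EvenCounts (P.edges.map (Sym2.map η)) ∧
      ∀ v ∈ P.support, ∀ l, x l = y l → v l = y l := by
  by_cases hxy : x = y
  · subst hxy
    exact ⟨.nil, .nil, fun _ => by simp, by simp⟩
  obtain ⟨j, hj⟩ := Function.ne_iff.1 hxy
  obtain ⟨i, hi, hyij⟩ := exists_swap_partner hperm hj
  have hxij : x i ≠ x j := hi ▸ fun h => hj h.symm
  have hxi : x i ≠ y i := hi ▸ hyij.symm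
  have hij : i ≠ j := fun h => hxij (congrArg x h)
  obtain ⟨p, hp⟩ := hG.exists_isPath (x i) (x j)
  obtain ⟨P, hP, hPeven, hPfix⟩ := exists_isPath_evenCounts_of_perm hG hη (x ∘ swap i j) y
    (by obtain ⟨σ, rfl⟩ := hperm; exact ⟨σ * swap i j, rfl⟩)
  have hPj : ∀ v ∈ P.support, v j = x i := fun v hv =>
    (hPfix v hv j (by simp [hi])).trans hi.symm
  refine ⟨(swapWalk x i j p).append P,
    (isPath_swapWalk hij hp).append hP fun v hv hv' =>
      eq_of_mem_support_swapWalk hxij hv (hPj v hv'),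
    ?_, fun v hv l hl => ?_⟩
  · rw [Walk.edges_append, List.map_append]
    exact (evenCounts_swapWalk (hη · _)).append hPeven
  have hli : l ≠ i := by rintro rfl; exact hxi hl
  have hlj : l ≠ j := by rintro rfl; exact hj hl
  rcases (Walk.mem_support_append_iff _ _).1 hv with hv | hv
  · rw [apply_of_mem_support_swapWalk hv hli hlj, hl]
  · exact hPfix v hv l (by rwa [comp_apply, swap_apply_of_ne_of_ne hli hlj])
termination_by hammingDist x y
decreasing_by exact hammingDist_comp_swap_lt hi hyij hj

lemma symOfTuple_comp_perm {k : ℕ} (z : Fin k → V) (σ : Perm (Fin k)) :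
    symOfTuple k (z ∘ σ) = symOfTuple k z :=
  Subtype.ext (Multiset.coe_eq_coe.mpr (σ.ofFn_comp_perm z))

/-- In the Cartesian power `G^k` of a connected graph `G`, any two vertices lying in
the same `S_k`-orbit (coordinate permutations of one another) are joined by a path `P`
with `η*(P) = 0`, where `η* ` is the map induced on `𝔽₂` edge spaces by the quotient
projection `η : G^k → G^(k)`. -/
theorem stmt_12 [Fintype V] [DecidableEq V] (G : SimpleGraph V) (hG : G.Connected)
    (k : ℕ) (x y : Fin k → V) (hperm : ∃ σ : Equiv.Perm (Fin k), x = y ∘ σ) :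
    ∃ P : (cartPow G k).Walk x y, P.IsPath ∧
      inducedMap (symOfTuple k) (fun e => if e ∈ P.edges then 1 else 0) = 0 := by
  obtain ⟨P, hP, hPeven, -⟩ :=
    exists_isPath_evenCounts_of_perm hG symOfTuple_comp_perm x y hperm
  exact ⟨P, hP, inducedMap_indicator_eq_zero hP.isTrail.edges_nodup hPeven⟩
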